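/- Let υ be a real number with υ > −2·min(δ₁,δ₂). Then there exist C > 0 and h₀ > 0 such that for all h ∈ (0,h₀) and all t ∈ [0, h^υ]: |Σ_{(n,m)∈ℕ²} |a_{n,m}|² e^{−2πit((n−n₀)/T_scl₁ + (m−m₀)/T_scl₂ + (n−n₀)²/T_srev₁ + (m−m₀)²/T_srev₂ + (n−n₀)(m−m₀)/T_srev₁₂)} − Σ_{(n,m)∈ℕ²} |a_{n,m}|² e^{−2πit((n−n₀)/T_scl₁ + (m−m₀)/T_scl₂ + (n−n₀)²/T_rev₁ + (m−m₀)²/T_rev₂ + (n−n₀)(m−m₀)/T_rev₁₂)}| ≤ C·h^{υ + min(δ₁,δ₂)}. -/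

import Mathlib

open Real MvPolynomial

noncomputable section

/-- Fourier transform on `ℝ²`: `𝓕 g (ξ) = ∫ g(x) e^{-2πi⟨x,ξ⟩} dx`. -/
def Ftr (g : ℝ × ℝ → ℝ) (ξ : ℝ × ℝ) : ℂ :=
  ∫ x : ℝ × ℝ, (g x : ℂ) *
    Complex.exp (-(2 * (π : ℂ) * Complex.I) * ((x.1 * ξ.1 + x.2 * ξ.2 : ℝ) : ℂ))

/-- Evaluation of a polynomial of two variables at `(x,y)`. -/
def pev (F : MvPolynomial (Fin 2) ℝ) (x y : ℝ) : ℝ := MvPolynomial.eval ![x, y] F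

/-- The semiclassical setting: harmonic-oscillator frequencies `ω₁, ω₂ > 0`, energies
`E₁, E₂ ∈ [0,1]`, localization exponents `δ₁', δ₂' ∈ (0,1)`, a nonzero nonnegative
Schwartz function `χ`, and, for each value of the semiclassical parameter `h`, the
(unique) minimizers `n₀ h`, `m₀ h` of `|τ_n - E₁|` resp. `|μ_m - E₂|` over `ℕ`,
where `τ_n = ω₁ h (n+1/2)` and `μ_m = ω₂ h (m+1/2)`. -/
structure SCSetup where
  ω₁ : ℝ
  ω₂ : ℝ
  hω₁ : 0 < ω₁
  hω₂ : 0 < ω₂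
  E₁ : ℝ
  E₂ : ℝ
  hE₁ : E₁ ∈ Set.Icc (0:ℝ) 1
  hE₂ : E₂ ∈ Set.Icc (0:ℝ) 1
  δ₁' : ℝ
  δ₂' : ℝ
  hδ₁' : δ₁' ∈ Set.Ioo (0:ℝ) 1
  hδ₂' : δ₂' ∈ Set.Ioo (0:ℝ) 1
  χ : SchwartzMap (ℝ × ℝ) ℝ
  hχ_ne : χ ≠ 0
  hχ_nonneg : ∀ x, 0 ≤ χ x
  n₀ : ℝ → ℕ
  m₀ : ℝ → ℕ
  hn₀ : ∀ h : ℝ, 0 < h → ∀ n : ℕ, n ≠ n₀ h →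
    |ω₁ * h * ((n₀ h : ℝ) + 1/2) - E₁| < |ω₁ * h * ((n : ℝ) + 1/2) - E₁|
  hm₀ : ∀ h : ℝ, 0 < h → ∀ m : ℕ, m ≠ m₀ h →
    |ω₂ * h * ((m₀ h : ℝ) + 1/2) - E₂| < |ω₂ * h * ((m : ℝ) + 1/2) - E₂|

namespace SCSetup

variable (S : SCSetup)

/-- Eigenvalues `τ_n = ω₁ h (n + 1/2)` of the first harmonic oscillator. -/
def eigτ (h : ℝ) (n : ℤ) : ℝ := S.ω₁ * h * ((n : ℝ) + 1/2)

/-- Eigenvalues `μ_m = ω₂ h (m + 1/2)` of the second harmonic oscillator. -/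
def eigμ (h : ℝ) (m : ℤ) : ℝ := S.ω₂ * h * ((m : ℝ) + 1/2)

/-- `𝓕(χ²)(0,0) = ‖χ‖²_{L²}` (a real number). -/
def F0 : ℝ := (Ftr (fun x => (S.χ x) ^ 2) 0).re

/-- Normalization constant `K_h = (𝓕(χ²)(0,0))^{-1/2} h^{(2-δ₁'-δ₂')/2}`. -/
def Kh (h : ℝ) : ℝ := S.F0 ^ (-(1:ℝ)/2) * h ^ ((2 - S.δ₁' - S.δ₂')/2)

/-- The coefficients `a_{n,m} = K_h χ((τ_n-τ_{n₀})/h^{δ₁'},(μ_m-μ_{m₀})/h^{δ₂'})`. -/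
def a (h : ℝ) (n m : ℤ) : ℝ :=
  S.Kh h * S.χ ((S.eigτ h n - S.eigτ h (S.n₀ h)) / h ^ S.δ₁',
                (S.eigμ h m - S.eigμ h (S.m₀ h)) / h ^ S.δ₂')

/-- Classical period `T_cl₁ = 2π/(ω₁ ∂F/∂X(E₁,E₂))`. -/
def Tcl₁ (F : MvPolynomial (Fin 2) ℝ) : ℝ := 2 * π / (S.ω₁ * pev (pderiv 0 F) S.E₁ S.E₂)

/-- Classical period `T_cl₂ = 2π/(ω₂ ∂F/∂Y(E₁,E₂))`. -/
def Tcl₂ (F : MvPolynomial (Fin 2) ℝ) : ℝ := 2 * π / (S.ω₂ * pev (pderiv 1 F) S.E₁ S.E₂)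

/-- Semi-classical period `T_scl₁ = 2π/(ω₁ ∂F/∂X(τ_{n₀},μ_{m₀}))`. -/
def Tscl₁ (F : MvPolynomial (Fin 2) ℝ) (h : ℝ) : ℝ :=
  2 * π / (S.ω₁ * pev (pderiv 0 F) (S.eigτ h (S.n₀ h)) (S.eigμ h (S.m₀ h)))

/-- Semi-classical period `T_scl₂ = 2π/(ω₂ ∂F/∂Y(τ_{n₀},μ_{m₀}))`. -/
def Tscl₂ (F : MvPolynomial (Fin 2) ℝ) (h : ℝ) : ℝ :=
  2 * π / (S.ω₂ * pev (pderiv 1 F) (S.eigτ h (S.n₀ h)) (S.eigμ h (S.m₀ h)))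

/-- Quantum return function `𝐫(t) = Σ |a_{n,m}|² e^{-i t F(τ_n,μ_m)/h}`. -/
def qret (F : MvPolynomial (Fin 2) ℝ) (h t : ℝ) : ℂ :=
  ∑' (n : ℕ) (m : ℕ), ((S.a h n m : ℝ) : ℂ) ^ 2 *
    Complex.exp (-Complex.I * (t : ℂ) * ((pev F (S.eigτ h n) (S.eigμ h m) : ℝ) : ℂ) / (h : ℂ))

/-- Linear approximation of the return function, with classical periods:
`𝐚₁(t) = Σ_{(n,m)∈ℕ²} |a_{n,m}|² e^{-2πit((n-n₀)/T_cl₁ + (m-m₀)/T_cl₂)}`. -/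
def a1 (F : MvPolynomial (Fin 2) ℝ) (h t : ℝ) : ℂ :=
  ∑' (n : ℕ) (m : ℕ), ((S.a h n m : ℝ) : ℂ) ^ 2 *
    Complex.exp (-(2 * (π : ℂ) * Complex.I) * (t : ℂ) *
      ((((n : ℝ) - (S.n₀ h : ℝ)) / S.Tcl₁ F + ((m : ℝ) - (S.m₀ h : ℝ)) / S.Tcl₂ F : ℝ) : ℂ))

/-- Linear approximation with semi-classical periods. -/
def a1scl (F : MvPolynomial (Fin 2) ℝ) (h t : ℝ) : ℂ :=
  ∑' (n : ℕ) (m : ℕ), ((S.a h n m : ℝ) : ℂ) ^ 2 *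
    Complex.exp (-(2 * (π : ℂ) * Complex.I) * (t : ℂ) *
      ((((n : ℝ) - (S.n₀ h : ℝ)) / S.Tscl₁ F h
        + ((m : ℝ) - (S.m₀ h : ℝ)) / S.Tscl₂ F h : ℝ) : ℂ))

end SCSetup

/-- Distance from `t` to the lattice `Tℤ`. -/
def dZ (t T : ℝ) : ℝ := ⨅ k : ℤ, |t - (k : ℝ) * T|

namespace SCSetup

variable (S : SCSetup)

/-- Semi-classical revival period `T_srev₁ = 4π/(h ω₁² ∂²F/∂X²(τ_{n₀},μ_{m₀}))`. -/
def Tsrev₁ (F : MvPolynomial (Fin 2) ℝ) (h : ℝ) : ℝ :=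
  4 * π / (h * S.ω₁ ^ 2 *
    pev (pderiv 0 (pderiv 0 F)) (S.eigτ h (S.n₀ h)) (S.eigμ h (S.m₀ h)))

/-- Semi-classical revival period `T_srev₂ = 4π/(h ω₂² ∂²F/∂Y²(τ_{n₀},μ_{m₀}))`. -/
def Tsrev₂ (F : MvPolynomial (Fin 2) ℝ) (h : ℝ) : ℝ :=
  4 * π / (h * S.ω₂ ^ 2 *
    pev (pderiv 1 (pderiv 1 F)) (S.eigτ h (S.n₀ h)) (S.eigμ h (S.m₀ h)))

/-- Semi-classical revival period `T_srev₁₂ = 4π/(h ω₁ω₂ ∂²F/∂X∂Y(τ_{n₀},μ_{m₀}))`. -/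
def Tsrev₁₂ (F : MvPolynomial (Fin 2) ℝ) (h : ℝ) : ℝ :=
  4 * π / (h * S.ω₁ * S.ω₂ *
    pev (pderiv 1 (pderiv 0 F)) (S.eigτ h (S.n₀ h)) (S.eigμ h (S.m₀ h)))

/-- Revival period `T_rev₁ = 4π/(h ω₁² ∂²F/∂X²(E₁,E₂))`. -/
def Trev₁ (F : MvPolynomial (Fin 2) ℝ) (h : ℝ) : ℝ :=
  4 * π / (h * S.ω₁ ^ 2 * pev (pderiv 0 (pderiv 0 F)) S.E₁ S.E₂)

/-- Revival period `T_rev₂ = 4π/(h ω₂² ∂²F/∂Y²(E₁,E₂))`. -/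
def Trev₂ (F : MvPolynomial (Fin 2) ℝ) (h : ℝ) : ℝ :=
  4 * π / (h * S.ω₂ ^ 2 * pev (pderiv 1 (pderiv 1 F)) S.E₁ S.E₂)

/-- Revival period `T_rev₁₂ = 4π/(h ω₁ω₂ ∂²F/∂X∂Y(E₁,E₂))`. -/
def Trev₁₂ (F : MvPolynomial (Fin 2) ℝ) (h : ℝ) : ℝ :=
  4 * π / (h * S.ω₁ * S.ω₂ * pev (pderiv 1 (pderiv 0 F)) S.E₁ S.E₂)

/-- Quadratic approximation of the return function with semi-classical revival periods. -/
def a2s (F : MvPolynomial (Fin 2) ℝ) (h t : ℝ) : ℂ :=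
  ∑' (n : ℕ) (m : ℕ), ((S.a h n m : ℝ) : ℂ) ^ 2 *
    Complex.exp (-(2 * (π : ℂ) * Complex.I) * (t : ℂ) *
      ((((n : ℝ) - (S.n₀ h : ℝ)) / S.Tscl₁ F h + ((m : ℝ) - (S.m₀ h : ℝ)) / S.Tscl₂ F h
        + ((n : ℝ) - (S.n₀ h : ℝ)) ^ 2 / S.Tsrev₁ F h
        + ((m : ℝ) - (S.m₀ h : ℝ)) ^ 2 / S.Tsrev₂ F h
        + ((n : ℝ) - (S.n₀ h : ℝ)) * ((m : ℝ) - (S.m₀ h : ℝ)) / S.Tsrev₁₂ F h : ℝ) : ℂ))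

/-- Quadratic approximation `𝐚₂` of the return function with revival periods. -/
def a2 (F : MvPolynomial (Fin 2) ℝ) (h t : ℝ) : ℂ :=
  ∑' (n : ℕ) (m : ℕ), ((S.a h n m : ℝ) : ℂ) ^ 2 *
    Complex.exp (-(2 * (π : ℂ) * Complex.I) * (t : ℂ) *
      ((((n : ℝ) - (S.n₀ h : ℝ)) / S.Tscl₁ F h + ((m : ℝ) - (S.m₀ h : ℝ)) / S.Tscl₂ F h
        + ((n : ℝ) - (S.n₀ h : ℝ)) ^ 2 / S.Trev₁ F h
        + ((m : ℝ) - (S.m₀ h : ℝ)) ^ 2 / S.Trev₂ F h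
        + ((n : ℝ) - (S.n₀ h : ℝ)) * ((m : ℝ) - (S.m₀ h : ℝ)) / S.Trev₁₂ F h : ℝ) : ℂ))

/-- Pseudo-classical function
`ψ_cl(t₁,t₂) = Σ |a_{n,m}|² e^{−2πit₁(n−n₀)/T_scl₁ − 2πit₂(m−m₀)/T_scl₂}`. -/
def ψcl (F : MvPolynomial (Fin 2) ℝ) (h t₁ t₂ : ℝ) : ℂ :=
  ∑' (n : ℕ) (m : ℕ), ((S.a h n m : ℝ) : ℂ) ^ 2 *
    Complex.exp (-(2 * (π : ℂ) * Complex.I) * (t₁ : ℂ) *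
        ((((n : ℝ) - (S.n₀ h : ℝ)) / S.Tscl₁ F h : ℝ) : ℂ)
      - (2 * (π : ℂ) * Complex.I) * (t₂ : ℂ) *
        ((((m : ℝ) - (S.m₀ h : ℝ)) / S.Tscl₂ F h : ℝ) : ℂ))

end SCSetup


section AuxLemmas

lemma expI_sub_one (r : ℝ) : ‖Complex.exp (r * Complex.I) - 1‖ ≤ |r| := by
  have hre : Complex.exp (r * Complex.I) - 1
      = Complex.ofReal (Real.cos r - 1) + Complex.ofReal (Real.sin r) * Complex.I := by
    rw [Complex.exp_mul_I, ← Complex.ofReal_cos, ← Complex.ofReal_sin]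
    push_cast; ring
  have hsq : ‖Complex.exp (r * Complex.I) - 1‖ ^ 2 ≤ |r| ^ 2 := by
    rw [hre]
    rw [Complex.sq_norm]
    rw [Complex.normSq_add_mul_I]
    have h1 : Real.sin (r/2) ^ 2 = 1/2 - Real.cos r / 2 := by
      have := Real.sin_sq_eq_half_sub (r/2)
      rwa [show 2 * (r/2) = r by ring] at this
    have h2 : Real.sin (r/2) ^ 2 ≤ (r/2) ^ 2 := by
      rw [← sq_abs (Real.sin (r/2)), ← sq_abs (r/2)]
      exact pow_le_pow_left₀ (abs_nonneg _) (Real.abs_sin_le_abs) 2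
    have h3 : (Real.cos r - 1)^2 + Real.sin r ^ 2 = 2 - 2 * Real.cos r := by
      have := Real.sin_sq_add_cos_sq r; nlinarith
    rw [h3, sq_abs]
    nlinarith
  have := Real.sqrt_le_sqrt hsq
  rwa [Real.sqrt_sq (norm_nonneg _), Real.sqrt_sq (abs_nonneg _)] at this

lemma expI_lip (x y : ℝ) :
    ‖Complex.exp ((x:ℂ) * Complex.I) - Complex.exp ((y:ℂ) * Complex.I)‖ ≤ |x - y| := by
  have hfac : Complex.exp ((x:ℂ) * Complex.I) - Complex.exp ((y:ℂ) * Complex.I)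
      = Complex.exp ((y:ℂ) * Complex.I) * (Complex.exp (((x - y : ℝ):ℂ) * Complex.I) - 1) := by
    rw [mul_sub, ← Complex.exp_add, mul_one]
    push_cast; ring_nf
  rw [hfac, norm_mul]
  rw [Complex.norm_exp_ofReal_mul_I, one_mul]
  exact expI_sub_one _


lemma invsq_summable {c : ℝ} (hc : 0 < c) (hc1 : c ≤ 1) :
    Summable (fun k : ℕ => ((1 + c * k) ^ 2)⁻¹) := by
  have hbase : Summable (fun k : ℕ => (((k:ℝ) + 1) ^ 2)⁻¹) := by
    have : Summable (fun k : ℕ => ((k:ℝ) ^ 2)⁻¹) := by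
      simpa [one_div] using (Real.summable_one_div_nat_pow (p := 2)).2 one_lt_two
    have := (summable_nat_add_iff (f := fun k : ℕ => ((k:ℝ) ^ 2)⁻¹) 1).2 this
    simpa using this
  refine Summable.of_nonneg_of_le (fun k => by positivity) (fun k => ?_)
    (hbase.mul_left (c ^ 2)⁻¹)
  have h1 : c * ((k:ℝ) + 1) ≤ 1 + c * k := by nlinarith [Nat.cast_nonneg (α := ℝ) k]
  have h0 : (0:ℝ) < c * ((k:ℝ)+1) := by positivity
  have h3 : ((1 + c * k) ^ 2)⁻¹ ≤ ((c * ((k:ℝ)+1)) ^ 2)⁻¹ := by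
    apply inv_anti₀ (by positivity); nlinarith
  calc ((1 + c * k) ^ 2)⁻¹ ≤ ((c * ((k:ℝ)+1)) ^ 2)⁻¹ := h3
    _ = (c ^ 2)⁻¹ * (((k:ℝ) + 1) ^ 2)⁻¹ := by rw [mul_pow, mul_inv]

lemma invsq_tsum_le {c : ℝ} (hc : 0 < c) (hc1 : c ≤ 1) :
    ∑' k : ℕ, ((1 + c * k) ^ 2)⁻¹ ≤ 2 / c := by
  apply Real.tsum_le_of_sum_range_le (fun k => by positivity)
  intro n
  match n with
  | 0 => simp; positivity
  | (n+1) =>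
    rw [Finset.sum_range_succ']
    have hg0 : ((1 + c * ((0:ℕ):ℝ)) ^ 2)⁻¹ = 1 := by norm_num
    rw [hg0]
    have key : ∀ i : ℕ, ((1 + c * ((i+1:ℕ):ℝ)) ^ 2)⁻¹
        ≤ c⁻¹ * ((1 + c * i)⁻¹ - (1 + c * ((i+1:ℕ):ℝ))⁻¹) := by
      intro i
      have hA : (0:ℝ) < 1 + c * i := by positivity
      have hB : (0:ℝ) < 1 + c * ((i+1:ℕ):ℝ) := by push_cast; positivity
      have hAB : (1 + c * i) ≤ (1 + c * ((i+1:ℕ):ℝ)) := by push_cast; nlinarith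
      have hid : c⁻¹ * ((1 + c * i)⁻¹ - (1 + c * ((i+1:ℕ):ℝ))⁻¹)
          = ((1 + c * i) * (1 + c * ((i+1:ℕ):ℝ)))⁻¹ := by
        push_cast
        field_simp
        ring
      rw [hid]
      exact inv_anti₀ (by positivity) (by nlinarith)
    have tele : ∑ i ∈ Finset.range n, ((1 + c * ((i+1:ℕ):ℝ)) ^ 2)⁻¹
        ≤ c⁻¹ * ((1 + c * ((0:ℕ):ℝ))⁻¹ - (1 + c * (n:ℝ))⁻¹) := by
      calc ∑ i ∈ Finset.range n, ((1 + c * ((i+1:ℕ):ℝ)) ^ 2)⁻¹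
          ≤ ∑ i ∈ Finset.range n, c⁻¹ * ((1 + c * i)⁻¹ - (1 + c * ((i+1:ℕ):ℝ))⁻¹) :=
            Finset.sum_le_sum (fun i _ => key i)
        _ = c⁻¹ * ∑ i ∈ Finset.range n, ((1 + c * i)⁻¹ - (1 + c * ((i+1:ℕ):ℝ))⁻¹) := by
            rw [Finset.mul_sum]
        _ = c⁻¹ * ((1 + c * ((0:ℕ):ℝ))⁻¹ - (1 + c * (n:ℝ))⁻¹) := by
            rw [Finset.sum_range_sub' (f := fun i : ℕ => (1 + c * (i:ℝ))⁻¹)]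
    have hn : (0:ℝ) < (1 + c * (n:ℝ))⁻¹ := by positivity
    have hc' : (1:ℝ) ≤ c⁻¹ := (one_le_inv₀ hc).mpr hc1
    have h00 : (1 + c * ((0:ℕ):ℝ))⁻¹ = 1 := by norm_num
    rw [h00] at tele
    have h2c : 2 / c = c⁻¹ + c⁻¹ := by rw [div_eq_mul_inv]; ring
    rw [h2c]
    nlinarith [tele, hn, hc', inv_nonneg.2 hc.le, mul_pos (inv_pos.2 hc) hn]

lemma shift_summable {c : ℝ} (hc : 0 < c) (hc1 : c ≤ 1) (N : ℕ) :
    Summable (fun k : ℕ => ((1 + c * |(k:ℝ) - N|) ^ 2)⁻¹) := by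
  rw [← summable_nat_add_iff N]
  have : (fun k : ℕ => ((1 + c * |((k + N : ℕ):ℝ) - N|) ^ 2)⁻¹)
      = fun k : ℕ => ((1 + c * k) ^ 2)⁻¹ := by
    funext k
    have : |((k + N : ℕ):ℝ) - N| = k := by
      push_cast; rw [add_sub_cancel_right, abs_of_nonneg (Nat.cast_nonneg k)]
    rw [this]
  simpa [this] using invsq_summable hc hc1

lemma shift_tsum_le {c : ℝ} (hc : 0 < c) (hc1 : c ≤ 1) (N : ℕ) :
    ∑' k : ℕ, ((1 + c * |(k:ℝ) - N|) ^ 2)⁻¹ ≤ 4 / c := by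
  set f : ℕ → ℝ := fun k => ((1 + c * |(k:ℝ) - N|) ^ 2)⁻¹ with hf
  have hsum := shift_summable hc hc1 N
  rw [← Summable.sum_add_tsum_nat_add N hsum]
  have htail : ∑' k : ℕ, f (k + N) ≤ 2 / c := by
    have heq : (fun k : ℕ => f (k + N)) = fun k : ℕ => ((1 + c * k) ^ 2)⁻¹ := by
      funext k
      have : |((k + N : ℕ):ℝ) - N| = k := by
        push_cast; rw [add_sub_cancel_right, abs_of_nonneg (Nat.cast_nonneg k)]
      simp only [hf, this]
    rw [heq]
    exact invsq_tsum_le hc hc1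
  have hhead : ∑ i ∈ Finset.range N, f i ≤ 2 / c := by
    rw [← Finset.sum_range_reflect]
    have hterm : ∀ j ∈ Finset.range N, f (N - 1 - j) ≤ ((1 + c * ((j+1:ℕ):ℝ)) ^ 2)⁻¹ := by
      intro j hj
      have hjN : j < N := Finset.mem_range.1 hj
      have hnat : (N - 1 - j) + (j + 1) = N := by omega
      have hcast : ((N - 1 - j : ℕ):ℝ) + ((j+1:ℕ):ℝ) = N := by
        rw [← Nat.cast_add, hnat]
      have habs : |((N - 1 - j : ℕ):ℝ) - N| = ((j+1:ℕ):ℝ) := by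
        rw [abs_sub_comm]
        rw [show (N:ℝ) - ((N - 1 - j : ℕ):ℝ) = ((j+1:ℕ):ℝ) by linarith]
        exact abs_of_nonneg (Nat.cast_nonneg _)
      simp only [hf, habs]
      exact le_refl _
    refine le_trans (Finset.sum_le_sum hterm) ?_
    have : ∑ j ∈ Finset.range N, ((1 + c * ((j+1:ℕ):ℝ)) ^ 2)⁻¹
        ≤ ∑ j ∈ Finset.range (N+1), ((1 + c * (j:ℝ)) ^ 2)⁻¹ := by
      rw [Finset.sum_range_succ']
      have h0 : (0:ℝ) ≤ ((1 + c * ((0:ℕ):ℝ)) ^ 2)⁻¹ := by positivity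
      refine le_add_of_le_of_nonneg (le_of_eq ?_) h0
      rfl
    refine le_trans this (le_trans (Summable.sum_le_tsum _ (fun k _ => by positivity)
      (invsq_summable hc hc1)) (invsq_tsum_le hc hc1))
  have h24 : (2:ℝ)/c + 2/c = 4/c := by ring
  linarith

lemma pev_lip (E₁ E₂ : ℝ) (P : MvPolynomial (Fin 2) ℝ) :
    ∃ L : ℝ, 0 ≤ L ∧ ∀ x y : ℝ, |x - E₁| ≤ 1 → |y - E₂| ≤ 1 →
      |pev P x y - pev P E₁ E₂| ≤ L * (|x - E₁| + |y - E₂|) := by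
  induction P using MvPolynomial.induction_on with
  | C c =>
    exact ⟨0, le_rfl, fun x y hx hy => by simp [pev]⟩
  | add p q hp hq =>
    obtain ⟨L1, hL1, h1⟩ := hp
    obtain ⟨L2, hL2, h2⟩ := hq
    refine ⟨L1 + L2, by positivity, fun x y hx hy => ?_⟩
    have e : pev (p + q) x y - pev (p + q) E₁ E₂
        = (pev p x y - pev p E₁ E₂) + (pev q x y - pev q E₁ E₂) := by
      simp [pev]; ring
    rw [e]
    calc |(pev p x y - pev p E₁ E₂) + (pev q x y - pev q E₁ E₂)|
        ≤ |pev p x y - pev p E₁ E₂| + |pev q x y - pev q E₁ E₂| := abs_add_le _ _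
      _ ≤ L1 * (|x - E₁| + |y - E₂|) + L2 * (|x - E₁| + |y - E₂|) :=
          add_le_add (h1 x y hx hy) (h2 x y hx hy)
      _ = (L1 + L2) * (|x - E₁| + |y - E₂|) := by ring
  | mul_X p i hp =>
    obtain ⟨L, hL, h⟩ := hp
    fin_cases i <;> simp only [Fin.isValue, Fin.mk_zero, Fin.mk_one]
    · refine ⟨L * (|E₁| + 1) + |pev p E₁ E₂|, by positivity, fun x y hx hy => ?_⟩
      have e : pev (p * X 0) x y = pev p x y * x := by simp [pev]
      have e' : pev (p * X 0) E₁ E₂ = pev p E₁ E₂ * E₁ := by simp [pev]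
      rw [e, e']
      have decomp : pev p x y * x - pev p E₁ E₂ * E₁
          = (pev p x y - pev p E₁ E₂) * x + pev p E₁ E₂ * (x - E₁) := by ring
      rw [decomp]
      have hxb : |x| ≤ |E₁| + 1 := by
        have := abs_sub_abs_le_abs_sub x E₁
        linarith
      have hs : 0 ≤ |x - E₁| + |y - E₂| := by positivity
      calc |(pev p x y - pev p E₁ E₂) * x + pev p E₁ E₂ * (x - E₁)|
          ≤ |pev p x y - pev p E₁ E₂| * |x| + |pev p E₁ E₂| * |x - E₁| := by
            refine le_trans (abs_add_le _ _) ?_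
            rw [abs_mul, abs_mul]
        _ ≤ (L * (|x - E₁| + |y - E₂|)) * (|E₁| + 1)
            + |pev p E₁ E₂| * (|x - E₁| + |y - E₂|) := by
            refine add_le_add ?_ ?_
            · exact mul_le_mul (h x y hx hy) hxb (abs_nonneg _) (by positivity)
            · exact mul_le_mul_of_nonneg_left (le_add_of_nonneg_right (abs_nonneg _)) (abs_nonneg _)
        _ = (L * (|E₁| + 1) + |pev p E₁ E₂|) * (|x - E₁| + |y - E₂|) := by ring
    · refine ⟨L * (|E₂| + 1) + |pev p E₁ E₂|, by positivity, fun x y hx hy => ?_⟩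
      have e : pev (p * X 1) x y = pev p x y * y := by simp [pev]
      have e' : pev (p * X 1) E₁ E₂ = pev p E₁ E₂ * E₂ := by simp [pev]
      rw [e, e']
      have decomp : pev p x y * y - pev p E₁ E₂ * E₂
          = (pev p x y - pev p E₁ E₂) * y + pev p E₁ E₂ * (y - E₂) := by ring
      rw [decomp]
      have hyb : |y| ≤ |E₂| + 1 := by
        have := abs_sub_abs_le_abs_sub y E₂
        linarith
      calc |(pev p x y - pev p E₁ E₂) * y + pev p E₁ E₂ * (y - E₂)|
          ≤ |pev p x y - pev p E₁ E₂| * |y| + |pev p E₁ E₂| * |y - E₂| := by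
            refine le_trans (abs_add_le _ _) ?_
            rw [abs_mul, abs_mul]
        _ ≤ (L * (|x - E₁| + |y - E₂|)) * (|E₂| + 1)
            + |pev p E₁ E₂| * (|x - E₁| + |y - E₂|) := by
            refine add_le_add ?_ ?_
            · exact mul_le_mul (h x y hx hy) hyb (abs_nonneg _) (by positivity)
            · exact mul_le_mul_of_nonneg_left (le_add_of_nonneg_left (abs_nonneg _)) (abs_nonneg _)
        _ = (L * (|E₂| + 1) + |pev p E₁ E₂|) * (|x - E₁| + |y - E₂|) := by ring


lemma tsum_tsum_sub_bound {f g : ℕ → ℕ → ℂ} {p q : ℕ → ℝ} {D₁ D₂ : ℝ}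
    (hp : Summable p) (hq : Summable q)
    (hpn : ∀ n, 0 ≤ p n) (hqn : ∀ m, 0 ≤ q m) (hD₂ : 0 ≤ D₂)
    (hf : ∀ n m, ‖f n m‖ ≤ D₁ * (p n * q m))
    (hg : ∀ n m, ‖g n m‖ ≤ D₁ * (p n * q m))
    (hfg : ∀ n m, ‖f n m - g n m‖ ≤ D₂ * (p n * q m)) :
    ‖(∑' n, ∑' m, f n m) - (∑' n, ∑' m, g n m)‖ ≤ D₂ * ((∑' n, p n) * (∑' m, q m)) := by
  have hqs : ∀ (n : ℕ) (D : ℝ), Summable (fun m => D * (p n * q m)) := by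
    intro n D
    simpa [mul_assoc] using hq.mul_left (D * p n)
  have hfs : ∀ n, Summable (f n) := fun n =>
    Summable.of_norm_bounded (hqs n D₁) (hf n)
  have hgs : ∀ n, Summable (g n) := fun n =>
    Summable.of_norm_bounded (hqs n D₁) (hg n)
  have htsum_mul : ∀ (n : ℕ) (D : ℝ), ∑' m, D * (p n * q m) = D * p n * (∑' m, q m) := by
    intro n D
    rw [show (fun m => D * (p n * q m)) = fun m => (D * p n) * q m by funext m; ring]
    exact tsum_mul_left
  have hGb : ∀ n, ‖∑' m, f n m‖ ≤ D₁ * p n * (∑' m, q m) := by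
    intro n
    refine le_trans (norm_tsum_le_tsum_norm
      (Summable.of_nonneg_of_le (fun m => norm_nonneg _) (hf n) (hqs n D₁))) ?_
    rw [← htsum_mul n D₁]
    exact Summable.tsum_le_tsum (hf n)
      (Summable.of_nonneg_of_le (fun m => norm_nonneg _) (hf n) (hqs n D₁)) (hqs n D₁)
  have hHb : ∀ n, ‖∑' m, g n m‖ ≤ D₁ * p n * (∑' m, q m) := by
    intro n
    refine le_trans (norm_tsum_le_tsum_norm
      (Summable.of_nonneg_of_le (fun m => norm_nonneg _) (hg n) (hqs n D₁))) ?_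
    rw [← htsum_mul n D₁]
    exact Summable.tsum_le_tsum (hg n)
      (Summable.of_nonneg_of_le (fun m => norm_nonneg _) (hg n) (hqs n D₁)) (hqs n D₁)
  have hpb : Summable (fun n => D₁ * (∑' m, q m) * p n) := hp.mul_left _
  have hGs : Summable (fun n => ∑' m, f n m) :=
    Summable.of_norm_bounded hpb (fun n => by
      refine le_trans (hGb n) (le_of_eq ?_); ring)
  have hHs : Summable (fun n => ∑' m, g n m) :=
    Summable.of_norm_bounded hpb (fun n => by
      refine le_trans (hHb n) (le_of_eq ?_); ring)
  rw [← Summable.tsum_sub hGs hHs]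
  have hdiffb : ∀ n, ‖(∑' m, f n m) - (∑' m, g n m)‖ ≤ D₂ * p n * (∑' m, q m) := by
    intro n
    rw [← Summable.tsum_sub (hfs n) (hgs n)]
    refine le_trans (norm_tsum_le_tsum_norm
      (Summable.of_nonneg_of_le (fun m => norm_nonneg _) (hfg n) (hqs n D₂))) ?_
    rw [← htsum_mul n D₂]
    exact Summable.tsum_le_tsum (hfg n)
      (Summable.of_nonneg_of_le (fun m => norm_nonneg _) (hfg n) (hqs n D₂)) (hqs n D₂)
  have hpb2 : Summable (fun n => D₂ * (∑' m, q m) * p n) := hp.mul_left _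
  refine le_trans (norm_tsum_le_tsum_norm (Summable.of_nonneg_of_le
    (fun n => norm_nonneg _) (fun n => le_trans (hdiffb n) (le_of_eq (by ring))) hpb2)) ?_
  have step : ∑' n, ‖(∑' m, f n m) - (∑' m, g n m)‖ ≤ ∑' n, D₂ * (∑' m, q m) * p n := by
    refine Summable.tsum_le_tsum (fun n => le_trans (hdiffb n) (le_of_eq (by ring)))
      (Summable.of_nonneg_of_le (fun n => norm_nonneg _)
        (fun n => le_trans (hdiffb n) (le_of_eq (by ring))) hpb2) hpb2
  refine le_trans step (le_of_eq ?_)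
  rw [tsum_mul_left]
  ring

lemma floor_half_bound {d E : ℝ} (hd : 0 < d) (hE0 : 0 ≤ E) :
    |d * ((⌊E / d⌋₊ : ℝ) + 1/2) - E| ≤ d / 2 := by
  have hq0 : 0 ≤ E / d := div_nonneg hE0 hd.le
  have h1 : (⌊E / d⌋₊ : ℝ) ≤ E / d := Nat.floor_le hq0
  have h2 : E / d < (⌊E / d⌋₊ : ℝ) + 1 := Nat.lt_floor_add_one _
  have hE : E = E / d * d := (div_mul_cancel₀ _ (ne_of_gt hd)).symm
  rw [abs_le]
  constructor
  · nlinarith [mul_lt_mul_of_pos_right h2 hd]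
  · nlinarith [mul_le_mul_of_nonneg_right h1 hd.le]

lemma num_quad_bound {a b d₁ d₂ d₃ K : ℝ} (hK : 0 ≤ K)
    (h₁ : |d₁| ≤ K) (h₂ : |d₂| ≤ K) (h₃ : |d₃| ≤ K) :
    |a^2*d₁ + b^2*d₂ + a*b*d₃| ≤ K * (2*(a^2+b^2)) := by
  have e1 : |a^2*d₁| ≤ a^2 * K := by
    rw [abs_mul, abs_of_nonneg (sq_nonneg a)]
    exact mul_le_mul_of_nonneg_left h₁ (sq_nonneg a)
  have e2 : |b^2*d₂| ≤ b^2 * K := by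
    rw [abs_mul, abs_of_nonneg (sq_nonneg b)]
    exact mul_le_mul_of_nonneg_left h₂ (sq_nonneg b)
  have e3 : |a*b*d₃| ≤ |a*b| * K := by
    rw [abs_mul]
    exact mul_le_mul_of_nonneg_left h₃ (abs_nonneg _)
  have e4 : |a*b| ≤ a^2 + b^2 := by
    rw [abs_mul]
    nlinarith [sq_nonneg (|a| - |b|), sq_abs a, sq_abs b, abs_nonneg a, abs_nonneg b]
  calc |a^2*d₁ + b^2*d₂ + a*b*d₃| ≤ |a^2*d₁ + b^2*d₂| + |a*b*d₃| := abs_add_le _ _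
    _ ≤ |a^2*d₁| + |b^2*d₂| + |a*b*d₃| := by linarith [abs_add_le (a^2*d₁) (b^2*d₂)]
    _ ≤ a^2*K + b^2*K + (a^2+b^2)*K := by
        refine add_le_add (add_le_add e1 e2) (le_trans e3 ?_)
        exact mul_le_mul_of_nonneg_right e4 hK
    _ = K * (2*(a^2+b^2)) := by ring

end AuxLemmas

set_option maxHeartbeats 2000000

/-- for `υ > −2 min(δ₁,δ₂)`, uniformly for `t ∈ [0,h^υ]`, the quadratic sums
with semi-classical revival periods and with revival periods differ by
`O(h^{υ+min(δ₁,δ₂)})`. -/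
theorem semiclassical_vs_revival_periods (S : SCSetup)
    (F : MvPolynomial (Fin 2) ℝ)
    (hFX : pev (pderiv 0 F) S.E₁ S.E₂ ≠ 0) (hFY : pev (pderiv 1 F) S.E₁ S.E₂ ≠ 0)
    (hFXX : pev (pderiv 0 (pderiv 0 F)) S.E₁ S.E₂ ≠ 0)
    (hFYY : pev (pderiv 1 (pderiv 1 F)) S.E₁ S.E₂ ≠ 0)
    (hFXY : pev (pderiv 1 (pderiv 0 F)) S.E₁ S.E₂ ≠ 0)
    (δ₁ δ₂ : ℝ) (hδ₁ : δ₁ ∈ Set.Ioo (0:ℝ) 1) (hδ₂ : δ₂ ∈ Set.Ioo (0:ℝ) 1)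
    (hδ₁'δ₁ : δ₁ < S.δ₁') (hδ₂'δ₂ : δ₂ < S.δ₂')
    (υ : ℝ) (hυ : -(2 * min δ₁ δ₂) < υ) :
    ∃ C h₀ : ℝ, 0 < C ∧ 0 < h₀ ∧ ∀ h : ℝ, h ∈ Set.Ioo (0:ℝ) h₀ →
      ∀ t : ℝ, t ∈ Set.Icc 0 (h ^ υ) →
        ‖S.a2s F h t - S.a2 F h t‖ ≤ C * h ^ (υ + min δ₁ δ₂) := by
  classical
  -- positivity of F0
  have hF0 : 0 < S.F0 := by
    have hχint : MeasureTheory.Integrable (fun x : ℝ × ℝ => (S.χ x)^2) := by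
      have h1 : MeasureTheory.Integrable (fun x : ℝ × ℝ => S.χ x) := S.χ.integrable
      have h2 := h1.bdd_mul (S.χ.continuous.aestronglyMeasurable)
        (c := SchwartzMap.seminorm ℝ 0 0 S.χ)
        (Filter.Eventually.of_forall fun x => SchwartzMap.norm_le_seminorm ℝ S.χ x)
      simpa [sq] using h2
    have hF0eq : S.F0 = ∫ x : ℝ × ℝ, (S.χ x)^2 := by
      unfold SCSetup.F0 Ftr
      have hsimp : ∀ x : ℝ × ℝ, (((S.χ x)^2 : ℝ) : ℂ) *
          Complex.exp (-(2 * (π : ℂ) * Complex.I) *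
            ((x.1 * (0 : ℝ × ℝ).1 + x.2 * (0 : ℝ × ℝ).2 : ℝ) : ℂ))
          = (((S.χ x)^2 : ℝ) : ℂ) := by
        intro x
        simp
      rw [show (∫ x : ℝ × ℝ, (((S.χ x)^2 : ℝ) : ℂ) *
          Complex.exp (-(2 * (π : ℂ) * Complex.I) *
            ((x.1 * (0 : ℝ × ℝ).1 + x.2 * (0 : ℝ × ℝ).2 : ℝ) : ℂ)))
          = ∫ x : ℝ × ℝ, (((S.χ x)^2 : ℝ) : ℂ) from MeasureTheory.integral_congr_ae
            (Filter.Eventually.of_forall hsimp)]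
      rw [show (∫ x : ℝ × ℝ, (((S.χ x)^2 : ℝ) : ℂ)) = ((∫ x : ℝ × ℝ, (S.χ x)^2 : ℝ) : ℂ)
        from integral_ofReal]
      simp
    rw [hF0eq]
    rw [MeasureTheory.integral_pos_iff_support_of_nonneg (fun x => sq_nonneg _) hχint]
    obtain ⟨x₀, hx₀⟩ : ∃ x₀, S.χ x₀ ≠ 0 := by
      by_contra hcon
      push_neg at hcon
      exact S.hχ_ne (by ext x; simpa using hcon x)
    have hopen : IsOpen (Function.support fun x : ℝ × ℝ => (S.χ x)^2) := by
      have hcont : Continuous fun x : ℝ × ℝ => (S.χ x)^2 := S.χ.continuous.pow 2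
      rw [Function.support_eq_preimage]
      exact isOpen_compl_singleton.preimage hcont
    exact hopen.measure_pos _ ⟨x₀, by simp [Function.support, pow_eq_zero_iff, hx₀]⟩
  -- Schwartz decay
  obtain ⟨B, hB0, hB⟩ : ∃ B : ℝ, 0 ≤ B ∧ ∀ u v : ℝ,
      |S.χ (u, v)| * ((1 + |u|)^2 * (1 + |v|)^2) ≤ B := by
    refine ⟨2 ^ 4 * (Finset.Iic ((4:ℕ),(0:ℕ))).sup
      (fun m => SchwartzMap.seminorm ℝ m.1 m.2) S.χ,
      mul_nonneg (by norm_num) (apply_nonneg _ _), fun u v => ?_⟩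
    have h1 := SchwartzMap.one_add_le_sup_seminorm_apply (𝕜 := ℝ)
      (m := ((4:ℕ),(0:ℕ))) (k := 4) (n := 0) le_rfl le_rfl S.χ (u, v)
    rw [norm_iteratedFDeriv_zero, Real.norm_eq_abs] at h1
    refine le_trans ?_ h1
    have hu : 1 + |u| ≤ 1 + ‖((u:ℝ), (v:ℝ))‖ := by
      have h2 : |u| ≤ ‖((u:ℝ), (v:ℝ))‖ := by
        simpa [Real.norm_eq_abs] using norm_fst_le ((u:ℝ), (v:ℝ))
      linarith
    have hv : 1 + |v| ≤ 1 + ‖((u:ℝ), (v:ℝ))‖ := by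
      have h2 : |v| ≤ ‖((u:ℝ), (v:ℝ))‖ := by
        simpa [Real.norm_eq_abs] using norm_snd_le ((u:ℝ), (v:ℝ))
      linarith
    have hu2 : (1 + |u|)^2 ≤ (1 + ‖((u:ℝ), (v:ℝ))‖)^2 :=
      pow_le_pow_left₀ (by positivity) hu 2
    have hv2 : (1 + |v|)^2 ≤ (1 + ‖((u:ℝ), (v:ℝ))‖)^2 :=
      pow_le_pow_left₀ (by positivity) hv 2
    have hprod : (1 + |u|)^2 * (1 + |v|)^2 ≤ (1 + ‖((u:ℝ), (v:ℝ))‖)^4 := by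
      calc (1 + |u|)^2 * (1 + |v|)^2
          ≤ (1 + ‖((u:ℝ), (v:ℝ))‖)^2 * (1 + ‖((u:ℝ), (v:ℝ))‖)^2 :=
            mul_le_mul hu2 hv2 (by positivity) (by positivity)
        _ = (1 + ‖((u:ℝ), (v:ℝ))‖)^4 := by ring
    calc |S.χ (u, v)| * ((1 + |u|)^2 * (1 + |v|)^2)
        ≤ |S.χ (u, v)| * (1 + ‖((u:ℝ), (v:ℝ))‖)^4 :=
          mul_le_mul_of_nonneg_left hprod (abs_nonneg _)
      _ = (1 + ‖((u:ℝ), (v:ℝ))‖)^4 * |S.χ (u, v)| := mul_comm _ _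
  -- Lipschitz constants for the three second derivatives
  obtain ⟨L₁, hL₁0, hL₁⟩ := pev_lip S.E₁ S.E₂ (pderiv 0 (pderiv 0 F))
  obtain ⟨L₂, hL₂0, hL₂⟩ := pev_lip S.E₁ S.E₂ (pderiv 1 (pderiv 1 F))
  obtain ⟨L₃, hL₃0, hL₃⟩ := pev_lip S.E₁ S.E₂ (pderiv 1 (pderiv 0 F))
  have hω₁ := S.hω₁
  have hω₂ := S.hω₂
  set CL : ℝ := (S.ω₁^2 * L₁ + S.ω₂^2 * L₂ + S.ω₁ * S.ω₂ * L₃) * (S.ω₁ + S.ω₂) / 2 + 1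
    with hCLdef
  have hCLpos : 0 < CL := by positivity
  have haux1 : (0:ℝ) ≤ S.ω₁^2 * L₁ := by positivity
  have haux2 : (0:ℝ) ≤ S.ω₂^2 * L₂ := by positivity
  have haux3 : (0:ℝ) ≤ S.ω₁ * S.ω₂ * L₃ := by positivity
  have hauxs : (0:ℝ) ≤ (S.ω₁ + S.ω₂) / 2 := by positivity
  have hCL₁ : S.ω₁^2 * L₁ * ((S.ω₁ + S.ω₂) / 2) ≤ CL := by
    rw [hCLdef]; nlinarith [mul_nonneg haux2 hauxs, mul_nonneg haux3 hauxs]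
  have hCL₂ : S.ω₂^2 * L₂ * ((S.ω₁ + S.ω₂) / 2) ≤ CL := by
    rw [hCLdef]; nlinarith [mul_nonneg haux1 hauxs, mul_nonneg haux3 hauxs]
  have hCL₃ : S.ω₁ * S.ω₂ * L₃ * ((S.ω₁ + S.ω₂) / 2) ≤ CL := by
    rw [hCLdef]; nlinarith [mul_nonneg haux1 hauxs, mul_nonneg haux2 hauxs]
  set C₀ : ℝ := 16 * CL * B^2 * S.F0⁻¹ * S.ω₁⁻¹ * S.ω₂⁻¹ * (S.ω₁⁻¹^2 + S.ω₂⁻¹^2) with hC₀def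
  have hC₀0 : 0 ≤ C₀ := by positivity
  set C : ℝ := 2 * C₀ + 1 with hCdef
  have hCpos : 0 < C := by positivity
  set h₀ : ℝ := min 1 (min ((min 1 S.ω₁⁻¹) ^ (1 - S.δ₁')⁻¹)
    ((min 1 S.ω₂⁻¹) ^ (1 - S.δ₂')⁻¹)) with hh₀def
  have hδ₁'lt1 := S.hδ₁'.2
  have hδ₁'pos := S.hδ₁'.1
  have hδ₂'lt1 := S.hδ₂'.2
  have hδ₂'pos := S.hδ₂'.1
  have he₁pos : 0 < 1 - S.δ₁' := by linarith
  have he₂pos : 0 < 1 - S.δ₂' := by linarith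
  have hh₀pos : 0 < h₀ := by
    refine lt_min one_pos (lt_min ?_ ?_) <;>
      exact Real.rpow_pos_of_pos (lt_min one_pos (by positivity)) _
  refine ⟨C, h₀, hCpos, hh₀pos, ?_⟩
  rintro h ⟨hh0, hhh₀⟩ t ⟨ht0, htle⟩
  -- basic h facts
  have hh1 : h ≤ 1 := le_of_lt (lt_of_lt_of_le hhh₀ (min_le_left _ _))
  set e₁ : ℝ := 1 - S.δ₁' with he₁def
  set e₂ : ℝ := 1 - S.δ₂' with he₂def
  set A₁ : ℝ := h ^ e₁ with hA₁def
  set A₂ : ℝ := h ^ e₂ with hA₂def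
  have hA₁pos : 0 < A₁ := Real.rpow_pos_of_pos hh0 _
  have hA₂pos : 0 < A₂ := Real.rpow_pos_of_pos hh0 _
  set c₁ : ℝ := S.ω₁ * A₁ with hc₁def
  set c₂ : ℝ := S.ω₂ * A₂ with hc₂def
  have hc₁pos : 0 < c₁ := mul_pos hω₁ hA₁pos
  have hc₂pos : 0 < c₂ := mul_pos hω₂ hA₂pos
  have hc₁le1 : c₁ ≤ 1 := by
    have hble : h ≤ (min 1 S.ω₁⁻¹) ^ (1 - S.δ₁')⁻¹ :=
      le_of_lt (lt_of_lt_of_le hhh₀ (le_trans (min_le_right _ _) (min_le_left _ _)))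
    have hbpos : (0:ℝ) < min 1 S.ω₁⁻¹ := lt_min one_pos (by positivity)
    have h1 : A₁ ≤ ((min 1 S.ω₁⁻¹) ^ (1 - S.δ₁')⁻¹) ^ e₁ :=
      Real.rpow_le_rpow hh0.le hble he₁pos.le
    have h2 : ((min 1 S.ω₁⁻¹) ^ (1 - S.δ₁')⁻¹) ^ e₁ = min 1 S.ω₁⁻¹ := by
      rw [← Real.rpow_mul hbpos.le, he₁def, inv_mul_cancel₀ (ne_of_gt he₁pos), Real.rpow_one]
    have h3 : A₁ ≤ S.ω₁⁻¹ := le_trans h1 (le_trans (le_of_eq h2) (min_le_right _ _))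
    calc c₁ = S.ω₁ * A₁ := rfl
      _ ≤ S.ω₁ * S.ω₁⁻¹ := mul_le_mul_of_nonneg_left h3 hω₁.le
      _ = 1 := mul_inv_cancel₀ (ne_of_gt hω₁)
  have hc₂le1 : c₂ ≤ 1 := by
    have hble : h ≤ (min 1 S.ω₂⁻¹) ^ (1 - S.δ₂')⁻¹ :=
      le_of_lt (lt_of_lt_of_le hhh₀ (le_trans (min_le_right _ _) (min_le_right _ _)))
    have hbpos : (0:ℝ) < min 1 S.ω₂⁻¹ := lt_min one_pos (by positivity)
    have h1 : A₂ ≤ ((min 1 S.ω₂⁻¹) ^ (1 - S.δ₂')⁻¹) ^ e₂ :=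
      Real.rpow_le_rpow hh0.le hble he₂pos.le
    have h2 : ((min 1 S.ω₂⁻¹) ^ (1 - S.δ₂')⁻¹) ^ e₂ = min 1 S.ω₂⁻¹ := by
      rw [← Real.rpow_mul hbpos.le, he₂def, inv_mul_cancel₀ (ne_of_gt he₂pos), Real.rpow_one]
    have h3 : A₂ ≤ S.ω₂⁻¹ := le_trans h1 (le_trans (le_of_eq h2) (min_le_right _ _))
    calc c₂ = S.ω₂ * A₂ := rfl
      _ ≤ S.ω₂ * S.ω₂⁻¹ := mul_le_mul_of_nonneg_left h3 hω₂.le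
      _ = 1 := mul_inv_cancel₀ (ne_of_gt hω₂)
  have hsplit₁ : A₁ * h ^ S.δ₁' = h := by
    rw [hA₁def, ← Real.rpow_add hh0, show e₁ + S.δ₁' = 1 by rw [he₁def]; ring, Real.rpow_one]
  have hsplit₂ : A₂ * h ^ S.δ₂' = h := by
    rw [hA₂def, ← Real.rpow_add hh0, show e₂ + S.δ₂' = 1 by rw [he₂def]; ring, Real.rpow_one]
  have hhδ₁le1 : h ^ S.δ₁' ≤ 1 := Real.rpow_le_one hh0.le hh1 hδ₁'pos.le
  have hhδ₂le1 : h ^ S.δ₂' ≤ 1 := Real.rpow_le_one hh0.le hh1 hδ₂'pos.le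
  have hhδ₁pos : 0 < h ^ S.δ₁' := Real.rpow_pos_of_pos hh0 _
  have hhδ₂pos : 0 < h ^ S.δ₂' := Real.rpow_pos_of_pos hh0 _
  have hω₁h : S.ω₁ * h ≤ 1 := by
    calc S.ω₁ * h = c₁ * h ^ S.δ₁' := by rw [hc₁def, mul_assoc, hsplit₁]
      _ ≤ 1 * 1 := mul_le_mul hc₁le1 hhδ₁le1 hhδ₁pos.le zero_le_one
      _ = 1 := by norm_num
  have hω₂h : S.ω₂ * h ≤ 1 := by
    calc S.ω₂ * h = c₂ * h ^ S.δ₂' := by rw [hc₂def, mul_assoc, hsplit₂]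
      _ ≤ 1 * 1 := mul_le_mul hc₂le1 hhδ₂le1 hhδ₂pos.le zero_le_one
      _ = 1 := by norm_num
  -- eigenvalue proximity
  have hτ : |S.ω₁ * h * ((S.n₀ h : ℝ) + 1/2) - S.E₁| ≤ S.ω₁ * h / 2 := by
    have hωh : 0 < S.ω₁ * h := mul_pos hω₁ hh0
    have hmin₁ : ∀ n : ℕ, |S.ω₁ * h * ((S.n₀ h : ℝ) + 1/2) - S.E₁|
        ≤ |S.ω₁ * h * ((n:ℝ) + 1/2) - S.E₁| := by
      intro n
      rcases eq_or_ne n (S.n₀ h) with rfl | hne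
      · exact le_rfl
      · exact le_of_lt (S.hn₀ h hh0 n hne)
    exact le_trans (hmin₁ ⌊S.E₁ / (S.ω₁ * h)⌋₊) (floor_half_bound hωh S.hE₁.1)
  have hμ : |S.ω₂ * h * ((S.m₀ h : ℝ) + 1/2) - S.E₂| ≤ S.ω₂ * h / 2 := by
    have hωh : 0 < S.ω₂ * h := mul_pos hω₂ hh0
    have hmin₂ : ∀ m : ℕ, |S.ω₂ * h * ((S.m₀ h : ℝ) + 1/2) - S.E₂|
        ≤ |S.ω₂ * h * ((m:ℝ) + 1/2) - S.E₂| := by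
      intro m
      rcases eq_or_ne m (S.m₀ h) with rfl | hne
      · exact le_rfl
      · exact le_of_lt (S.hm₀ h hh0 m hne)
    exact le_trans (hmin₂ ⌊S.E₂ / (S.ω₂ * h)⌋₊) (floor_half_bound hωh S.hE₂.1)
  have hτeq : S.eigτ h ((S.n₀ h : ℕ) : ℤ) = S.ω₁ * h * ((S.n₀ h : ℝ) + 1/2) := by
    unfold SCSetup.eigτ; push_cast; ring
  have hμeq : S.eigμ h ((S.m₀ h : ℕ) : ℤ) = S.ω₂ * h * ((S.m₀ h : ℝ) + 1/2) := by
    unfold SCSetup.eigμ; push_cast; ring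
  have hτ1 : |S.eigτ h ((S.n₀ h : ℕ) : ℤ) - S.E₁| ≤ 1 := by
    rw [hτeq]; refine le_trans hτ ?_; linarith only [hω₁h, hτ]
  have hμ1 : |S.eigμ h ((S.m₀ h : ℕ) : ℤ) - S.E₂| ≤ 1 := by
    rw [hμeq]; refine le_trans hμ ?_; linarith only [hω₂h, hμ]
  have hτμsum : |S.eigτ h ((S.n₀ h : ℕ) : ℤ) - S.E₁| + |S.eigμ h ((S.m₀ h : ℕ) : ℤ) - S.E₂|
      ≤ (S.ω₁ + S.ω₂) * h / 2 := by
    rw [hτeq, hμeq]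
    have := hτ
    have := hμ
    linarith only [hτ, hμ]
  -- rewriting the coefficients
  have hKh2 : (S.Kh h)^2 = S.F0⁻¹ * (A₁ * A₂) := by
    unfold SCSetup.Kh
    rw [mul_pow]
    have h1 : (S.F0 ^ (-(1:ℝ)/2))^2 = S.F0⁻¹ := by
      rw [← Real.rpow_natCast (S.F0 ^ (-(1:ℝ)/2)) 2, ← Real.rpow_mul hF0.le,
        show (-(1:ℝ)/2) * ((2:ℕ):ℝ) = -1 by push_cast; ring, Real.rpow_neg_one]
    have h2 : (h ^ ((2 - S.δ₁' - S.δ₂')/2))^2 = A₁ * A₂ := by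
      rw [← Real.rpow_natCast (h ^ ((2 - S.δ₁' - S.δ₂')/2)) 2, ← Real.rpow_mul hh0.le,
        hA₁def, hA₂def, ← Real.rpow_add hh0]
      congr 1
      rw [he₁def, he₂def]; push_cast; ring
    rw [h1, h2]
  have harg1 : ∀ n : ℕ, (S.eigτ h (n:ℤ) - S.eigτ h ((S.n₀ h : ℕ) : ℤ)) / h ^ S.δ₁'
      = c₁ * ((n:ℝ) - (S.n₀ h : ℝ)) := by
    intro n
    unfold SCSetup.eigτ
    push_cast
    rw [div_eq_iff (ne_of_gt hhδ₁pos), hc₁def]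
    calc S.ω₁ * h * ((n:ℝ) + 1/2) - S.ω₁ * h * ((S.n₀ h : ℝ) + 1/2)
        = S.ω₁ * (A₁ * h ^ S.δ₁') * ((n:ℝ) - (S.n₀ h : ℝ)) := by rw [hsplit₁]; ring
      _ = S.ω₁ * A₁ * ((n:ℝ) - (S.n₀ h : ℝ)) * h ^ S.δ₁' := by ring
  have harg2 : ∀ m : ℕ, (S.eigμ h (m:ℤ) - S.eigμ h ((S.m₀ h : ℕ) : ℤ)) / h ^ S.δ₂'
      = c₂ * ((m:ℝ) - (S.m₀ h : ℝ)) := by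
    intro m
    unfold SCSetup.eigμ
    push_cast
    rw [div_eq_iff (ne_of_gt hhδ₂pos), hc₂def]
    calc S.ω₂ * h * ((m:ℝ) + 1/2) - S.ω₂ * h * ((S.m₀ h : ℝ) + 1/2)
        = S.ω₂ * (A₂ * h ^ S.δ₂') * ((m:ℝ) - (S.m₀ h : ℝ)) := by rw [hsplit₂]; ring
      _ = S.ω₂ * A₂ * ((m:ℝ) - (S.m₀ h : ℝ)) * h ^ S.δ₂' := by ring
  have ha : ∀ n m : ℕ, S.a h n m
      = S.Kh h * S.χ (c₁ * ((n:ℝ) - (S.n₀ h : ℝ)), c₂ * ((m:ℝ) - (S.m₀ h : ℝ))) := by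
    intro n m
    unfold SCSetup.a
    rw [harg1 n, harg2 m]
  -- summable majorants
  set P₁ : ℕ → ℝ := fun n => ((1 + c₁ * |(n:ℝ) - (S.n₀ h : ℝ)|)^2)⁻¹ with hP₁def
  set P₂ : ℕ → ℝ := fun m => ((1 + c₂ * |(m:ℝ) - (S.m₀ h : ℝ)|)^2)⁻¹ with hP₂def
  have hP₁sum : Summable P₁ := shift_summable hc₁pos hc₁le1 (S.n₀ h)
  have hP₂sum : Summable P₂ := shift_summable hc₂pos hc₂le1 (S.m₀ h)
  have hP₁tsum : ∑' n, P₁ n ≤ 4 / c₁ := shift_tsum_le hc₁pos hc₁le1 (S.n₀ h)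
  have hP₂tsum : ∑' m, P₂ m ≤ 4 / c₂ := shift_tsum_le hc₂pos hc₂le1 (S.m₀ h)
  have hP₁pos : ∀ n, 0 < P₁ n := fun n => by
    rw [hP₁def]
    have : (0:ℝ) < 1 + c₁ * |(n:ℝ) - (S.n₀ h : ℝ)| := by positivity
    positivity
  have hP₂pos : ∀ m, 0 < P₂ m := fun m => by
    rw [hP₂def]
    have : (0:ℝ) < 1 + c₂ * |(m:ℝ) - (S.m₀ h : ℝ)| := by positivity
    positivity
  have hP₁le1 : ∀ n, P₁ n ≤ 1 := by
    intro n
    rw [hP₁def]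
    have h1 : (1:ℝ) ≤ 1 + c₁ * |(n:ℝ) - (S.n₀ h : ℝ)| :=
      le_add_of_nonneg_right (by positivity)
    have h2 : (1:ℝ) ≤ (1 + c₁ * |(n:ℝ) - (S.n₀ h : ℝ)|)^2 := by
      calc (1:ℝ) = 1^2 := by norm_num
        _ ≤ (1 + c₁ * |(n:ℝ) - (S.n₀ h : ℝ)|)^2 := pow_le_pow_left₀ one_pos.le h1 2
    exact inv_le_one_of_one_le₀ h2
  have hP₂le1 : ∀ m, P₂ m ≤ 1 := by
    intro m
    rw [hP₂def]
    have h1 : (1:ℝ) ≤ 1 + c₂ * |(m:ℝ) - (S.m₀ h : ℝ)| :=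
      le_add_of_nonneg_right (by positivity)
    have h2 : (1:ℝ) ≤ (1 + c₂ * |(m:ℝ) - (S.m₀ h : ℝ)|)^2 := by
      calc (1:ℝ) = 1^2 := by norm_num
        _ ≤ (1 + c₂ * |(m:ℝ) - (S.m₀ h : ℝ)|)^2 := pow_le_pow_left₀ one_pos.le h1 2
    exact inv_le_one_of_one_le₀ h2
  set CA : ℝ := B^2 * S.F0⁻¹ * (A₁ * A₂) with hCAdef
  have hCA0 : 0 ≤ CA := by positivity
  -- pointwise bound on χ²
  have hχsq : ∀ n m : ℕ,
      (S.χ (c₁ * ((n:ℝ) - (S.n₀ h : ℝ)), c₂ * ((m:ℝ) - (S.m₀ h : ℝ))))^2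
      ≤ B^2 * (P₁ n * P₂ m)^2 := by
    intro n m
    set u : ℝ := c₁ * ((n:ℝ) - (S.n₀ h : ℝ)) with hudef
    set v : ℝ := c₂ * ((m:ℝ) - (S.m₀ h : ℝ)) with hvdef
    have hPu : P₁ n = ((1 + |u|)^2)⁻¹ := by
      rw [hP₁def, hudef, abs_mul, abs_of_pos hc₁pos]
    have hPv : P₂ m = ((1 + |v|)^2)⁻¹ := by
      rw [hP₂def, hvdef, abs_mul, abs_of_pos hc₂pos]
    have hD1 : (0:ℝ) < (1 + |u|)^2 := by positivity
    have hD2 : (0:ℝ) < (1 + |v|)^2 := by positivity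
    have h3 : |S.χ (u, v)| ≤ B * (P₁ n * P₂ m) := by
      rw [hPu, hPv]
      have hBB := hB u v
      calc |S.χ (u, v)| = |S.χ (u, v)| * ((1 + |u|)^2 * (1 + |v|)^2)
            * (((1 + |u|)^2)⁻¹ * ((1 + |v|)^2)⁻¹) := by
            field_simp
        _ ≤ B * (((1 + |u|)^2)⁻¹ * ((1 + |v|)^2)⁻¹) :=
            mul_le_mul_of_nonneg_right hBB (by positivity)
    calc (S.χ (u, v))^2 = |S.χ (u, v)|^2 := (sq_abs _).symm
      _ ≤ (B * (P₁ n * P₂ m))^2 :=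
          pow_le_pow_left₀ (abs_nonneg _) h3 2
      _ = B^2 * (P₁ n * P₂ m)^2 := by ring
  have hAsq : ∀ n m : ℕ, (S.a h n m)^2 ≤ CA * (P₁ n * P₂ m)^2 := by
    intro n m
    rw [ha n m, mul_pow, hKh2, hCAdef]
    calc S.F0⁻¹ * (A₁ * A₂) * (S.χ (c₁ * ((n:ℝ) - (S.n₀ h : ℝ)),
            c₂ * ((m:ℝ) - (S.m₀ h : ℝ))))^2
        ≤ S.F0⁻¹ * (A₁ * A₂) * (B^2 * (P₁ n * P₂ m)^2) :=
          mul_le_mul_of_nonneg_left (hχsq n m) (by positivity)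
      _ = B^2 * S.F0⁻¹ * (A₁ * A₂) * (P₁ n * P₂ m)^2 := by ring
  have hAi : ∀ n m : ℕ, (S.a h n m)^2 ≤ CA * (P₁ n * P₂ m) := by
    intro n m
    refine le_trans (hAsq n m) (mul_le_mul_of_nonneg_left ?_ hCA0)
    have hp0 : 0 ≤ P₁ n * P₂ m := mul_nonneg (hP₁pos n).le (hP₂pos m).le
    have hp1 : P₁ n * P₂ m ≤ 1 := mul_le_one₀ (hP₁le1 n) (hP₂pos m).le (hP₂le1 m)
    calc (P₁ n * P₂ m)^2 = (P₁ n * P₂ m) * (P₁ n * P₂ m) := sq _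
      _ ≤ 1 * (P₁ n * P₂ m) := mul_le_mul_of_nonneg_right hp1 hp0
      _ = P₁ n * P₂ m := one_mul _
  have hAii : ∀ n m : ℕ, (S.a h n m)^2
        * (((n:ℝ) - (S.n₀ h : ℝ))^2 + ((m:ℝ) - (S.m₀ h : ℝ))^2)
      ≤ CA * (c₁⁻¹^2 + c₂⁻¹^2) * (P₁ n * P₂ m) := by
    intro n m
    have key₁ : (P₁ n)^2 * ((n:ℝ) - (S.n₀ h : ℝ))^2 ≤ c₁⁻¹^2 * P₁ n := by
      set w : ℝ := (1 + c₁ * |(n:ℝ) - (S.n₀ h : ℝ)|)^2 with hwdef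
      have hw0 : 0 < w := by
        have : (0:ℝ) < 1 + c₁ * |(n:ℝ) - (S.n₀ h : ℝ)| := by positivity
        positivity
      have hPw : P₁ n = w⁻¹ := by rw [hP₁def]
      have hsq : (c₁ * |(n:ℝ) - (S.n₀ h : ℝ)|)^2 ≤ w := by
        rw [hwdef]
        have h0 : 0 ≤ c₁ * |(n:ℝ) - (S.n₀ h : ℝ)| := by positivity
        exact pow_le_pow_left₀ h0 (by linarith only [h0]) 2
      have hn2 : ((n:ℝ) - (S.n₀ h : ℝ))^2 ≤ c₁⁻¹^2 * w := by
        have heq : c₁⁻¹^2 * (c₁ * |(n:ℝ) - (S.n₀ h : ℝ)|)^2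
            = ((n:ℝ) - (S.n₀ h : ℝ))^2 := by
          rw [mul_pow]
          rw [show c₁⁻¹^2 * (c₁^2 * |(n:ℝ) - (S.n₀ h : ℝ)|^2)
            = (c₁⁻¹ * c₁)^2 * |(n:ℝ) - (S.n₀ h : ℝ)|^2 by ring]
          rw [inv_mul_cancel₀ (ne_of_gt hc₁pos), one_pow, one_mul, sq_abs]
        rw [← heq]
        exact mul_le_mul_of_nonneg_left hsq (by positivity)
      calc (P₁ n)^2 * ((n:ℝ) - (S.n₀ h : ℝ))^2
          ≤ (P₁ n)^2 * (c₁⁻¹^2 * w) :=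
            mul_le_mul_of_nonneg_left hn2 (by positivity)
        _ = c₁⁻¹^2 * (P₁ n * (P₁ n * w)) := by ring
        _ = c₁⁻¹^2 * P₁ n := by
            rw [hPw, inv_mul_cancel₀ (ne_of_gt hw0), mul_one]
    have key₂ : (P₂ m)^2 * ((m:ℝ) - (S.m₀ h : ℝ))^2 ≤ c₂⁻¹^2 * P₂ m := by
      set w : ℝ := (1 + c₂ * |(m:ℝ) - (S.m₀ h : ℝ)|)^2 with hwdef
      have hw0 : 0 < w := by
        have : (0:ℝ) < 1 + c₂ * |(m:ℝ) - (S.m₀ h : ℝ)| := by positivity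
        positivity
      have hPw : P₂ m = w⁻¹ := by rw [hP₂def]
      have hsq : (c₂ * |(m:ℝ) - (S.m₀ h : ℝ)|)^2 ≤ w := by
        rw [hwdef]
        have h0 : 0 ≤ c₂ * |(m:ℝ) - (S.m₀ h : ℝ)| := by positivity
        exact pow_le_pow_left₀ h0 (by linarith only [h0]) 2
      have hm2 : ((m:ℝ) - (S.m₀ h : ℝ))^2 ≤ c₂⁻¹^2 * w := by
        have heq : c₂⁻¹^2 * (c₂ * |(m:ℝ) - (S.m₀ h : ℝ)|)^2
            = ((m:ℝ) - (S.m₀ h : ℝ))^2 := by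
          rw [mul_pow]
          rw [show c₂⁻¹^2 * (c₂^2 * |(m:ℝ) - (S.m₀ h : ℝ)|^2)
            = (c₂⁻¹ * c₂)^2 * |(m:ℝ) - (S.m₀ h : ℝ)|^2 by ring]
          rw [inv_mul_cancel₀ (ne_of_gt hc₂pos), one_pow, one_mul, sq_abs]
        rw [← heq]
        exact mul_le_mul_of_nonneg_left hsq (by positivity)
      calc (P₂ m)^2 * ((m:ℝ) - (S.m₀ h : ℝ))^2
          ≤ (P₂ m)^2 * (c₂⁻¹^2 * w) :=
            mul_le_mul_of_nonneg_left hm2 (by positivity)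
        _ = c₂⁻¹^2 * (P₂ m * (P₂ m * w)) := by ring
        _ = c₂⁻¹^2 * P₂ m := by
            rw [hPw, inv_mul_cancel₀ (ne_of_gt hw0), mul_one]
    have hP₁sqle : (P₁ n)^2 ≤ P₁ n := by
      calc (P₁ n)^2 = P₁ n * P₁ n := sq _
        _ ≤ 1 * P₁ n := mul_le_mul_of_nonneg_right (hP₁le1 n) (hP₁pos n).le
        _ = P₁ n := one_mul _
    have hP₂sqle : (P₂ m)^2 ≤ P₂ m := by
      calc (P₂ m)^2 = P₂ m * P₂ m := sq _
        _ ≤ 1 * P₂ m := mul_le_mul_of_nonneg_right (hP₂le1 m) (hP₂pos m).le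
        _ = P₂ m := one_mul _
    calc (S.a h n m)^2 * (((n:ℝ) - (S.n₀ h : ℝ))^2 + ((m:ℝ) - (S.m₀ h : ℝ))^2)
        ≤ CA * (P₁ n * P₂ m)^2 * (((n:ℝ) - (S.n₀ h : ℝ))^2 + ((m:ℝ) - (S.m₀ h : ℝ))^2) :=
          mul_le_mul_of_nonneg_right (hAsq n m) (by positivity)
      _ = CA * (((P₁ n)^2 * ((n:ℝ) - (S.n₀ h : ℝ))^2) * (P₂ m)^2
          + (P₁ n)^2 * ((P₂ m)^2 * ((m:ℝ) - (S.m₀ h : ℝ))^2)) := by ring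
      _ ≤ CA * ((c₁⁻¹^2 * P₁ n) * P₂ m + P₁ n * (c₂⁻¹^2 * P₂ m)) := by
          refine mul_le_mul_of_nonneg_left (add_le_add ?_ ?_) hCA0
          · refine mul_le_mul key₁ hP₂sqle (by positivity) ?_
            positivity
          · refine mul_le_mul hP₁sqle key₂ (by positivity) ?_
            exact (hP₁pos n).le
      _ = CA * (c₁⁻¹^2 + c₂⁻¹^2) * (P₁ n * P₂ m) := by ring
  -- norm of the summands
  have hanorm : ∀ (n m : ℕ) (X : ℝ),
      ‖((S.a h n m : ℝ) : ℂ)^2 * Complex.exp (-(2 * (π:ℂ) * Complex.I) * (t:ℂ) * ((X:ℝ):ℂ))‖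
      = (S.a h n m)^2 := by
    intro n m X
    rw [norm_mul, norm_pow, Complex.norm_real, Real.norm_eq_abs]
    rw [show -(2 * (π:ℂ) * Complex.I) * (t:ℂ) * ((X:ℝ):ℂ)
      = (((-(2*π*t*X)) : ℝ) : ℂ) * Complex.I by push_cast; ring]
    rw [Complex.norm_exp_ofReal_mul_I, mul_one, sq_abs]
  have hexpdiff : ∀ X Y : ℝ,
      ‖Complex.exp (-(2 * (π:ℂ) * Complex.I) * (t:ℂ) * ((X:ℝ):ℂ))
        - Complex.exp (-(2 * (π:ℂ) * Complex.I) * (t:ℂ) * ((Y:ℝ):ℂ))‖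
      ≤ 2*π*t*|X - Y| := by
    intro X Y
    rw [show -(2 * (π:ℂ) * Complex.I) * (t:ℂ) * ((X:ℝ):ℂ)
      = (((-(2*π*t*X)) : ℝ) : ℂ) * Complex.I by push_cast; ring]
    rw [show -(2 * (π:ℂ) * Complex.I) * (t:ℂ) * ((Y:ℝ):ℂ)
      = (((-(2*π*t*Y)) : ℝ) : ℂ) * Complex.I by push_cast; ring]
    refine le_trans (expI_lip _ _) ?_
    rw [show (-(2*π*t*X)) - (-(2*π*t*Y)) = (2*π*t)*(Y - X) by ring, abs_mul,
      abs_of_nonneg (by positivity : (0:ℝ) ≤ 2*π*t), abs_sub_comm]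
  -- the phase difference bound
  have hXdiff : ∀ n m : ℕ,
      |(((n : ℝ) - (S.n₀ h : ℝ)) / S.Tscl₁ F h + ((m : ℝ) - (S.m₀ h : ℝ)) / S.Tscl₂ F h
        + ((n : ℝ) - (S.n₀ h : ℝ)) ^ 2 / S.Tsrev₁ F h
        + ((m : ℝ) - (S.m₀ h : ℝ)) ^ 2 / S.Tsrev₂ F h
        + ((n : ℝ) - (S.n₀ h : ℝ)) * ((m : ℝ) - (S.m₀ h : ℝ)) / S.Tsrev₁₂ F h)
      - (((n : ℝ) - (S.n₀ h : ℝ)) / S.Tscl₁ F h + ((m : ℝ) - (S.m₀ h : ℝ)) / S.Tscl₂ F h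
        + ((n : ℝ) - (S.n₀ h : ℝ)) ^ 2 / S.Trev₁ F h
        + ((m : ℝ) - (S.m₀ h : ℝ)) ^ 2 / S.Trev₂ F h
        + ((n : ℝ) - (S.n₀ h : ℝ)) * ((m : ℝ) - (S.m₀ h : ℝ)) / S.Trev₁₂ F h)|
      ≤ h^2 * CL * (((n : ℝ) - (S.n₀ h : ℝ))^2 + ((m : ℝ) - (S.m₀ h : ℝ))^2) / (2*π) := by
    intro n m
    have hd₁ : |h * S.ω₁^2 * (pev (pderiv 0 (pderiv 0 F)) (S.eigτ h ((S.n₀ h : ℕ) : ℤ))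
          (S.eigμ h ((S.m₀ h : ℕ) : ℤ)) - pev (pderiv 0 (pderiv 0 F)) S.E₁ S.E₂)|
        ≤ h^2 * CL := by
      rw [abs_mul, abs_of_nonneg (by positivity : (0:ℝ) ≤ h * S.ω₁^2)]
      have hb := hL₁ _ _ hτ1 hμ1
      calc h * S.ω₁^2 * |pev (pderiv 0 (pderiv 0 F)) (S.eigτ h ((S.n₀ h : ℕ) : ℤ))
            (S.eigμ h ((S.m₀ h : ℕ) : ℤ)) - pev (pderiv 0 (pderiv 0 F)) S.E₁ S.E₂|
          ≤ h * S.ω₁^2 * (L₁ * ((S.ω₁ + S.ω₂) * h / 2)) := by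
            refine mul_le_mul_of_nonneg_left (le_trans hb ?_) (by positivity)
            exact mul_le_mul_of_nonneg_left hτμsum hL₁0
        _ = (S.ω₁^2 * L₁ * ((S.ω₁ + S.ω₂)/2)) * h^2 := by ring
        _ ≤ CL * h^2 := mul_le_mul_of_nonneg_right hCL₁ (by positivity)
        _ = h^2 * CL := mul_comm _ _
    have hd₂ : |h * S.ω₂^2 * (pev (pderiv 1 (pderiv 1 F)) (S.eigτ h ((S.n₀ h : ℕ) : ℤ))
          (S.eigμ h ((S.m₀ h : ℕ) : ℤ)) - pev (pderiv 1 (pderiv 1 F)) S.E₁ S.E₂)|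
        ≤ h^2 * CL := by
      rw [abs_mul, abs_of_nonneg (by positivity : (0:ℝ) ≤ h * S.ω₂^2)]
      have hb := hL₂ _ _ hτ1 hμ1
      calc h * S.ω₂^2 * |pev (pderiv 1 (pderiv 1 F)) (S.eigτ h ((S.n₀ h : ℕ) : ℤ))
            (S.eigμ h ((S.m₀ h : ℕ) : ℤ)) - pev (pderiv 1 (pderiv 1 F)) S.E₁ S.E₂|
          ≤ h * S.ω₂^2 * (L₂ * ((S.ω₁ + S.ω₂) * h / 2)) := by
            refine mul_le_mul_of_nonneg_left (le_trans hb ?_) (by positivity)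
            exact mul_le_mul_of_nonneg_left hτμsum hL₂0
        _ = (S.ω₂^2 * L₂ * ((S.ω₁ + S.ω₂)/2)) * h^2 := by ring
        _ ≤ CL * h^2 := mul_le_mul_of_nonneg_right hCL₂ (by positivity)
        _ = h^2 * CL := mul_comm _ _
    have hd₃ : |h * S.ω₁ * S.ω₂ * (pev (pderiv 1 (pderiv 0 F)) (S.eigτ h ((S.n₀ h : ℕ) : ℤ))
          (S.eigμ h ((S.m₀ h : ℕ) : ℤ)) - pev (pderiv 1 (pderiv 0 F)) S.E₁ S.E₂)|
        ≤ h^2 * CL := by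
      rw [abs_mul, abs_of_nonneg (by positivity : (0:ℝ) ≤ h * S.ω₁ * S.ω₂)]
      have hb := hL₃ _ _ hτ1 hμ1
      calc h * S.ω₁ * S.ω₂ * |pev (pderiv 1 (pderiv 0 F)) (S.eigτ h ((S.n₀ h : ℕ) : ℤ))
            (S.eigμ h ((S.m₀ h : ℕ) : ℤ)) - pev (pderiv 1 (pderiv 0 F)) S.E₁ S.E₂|
          ≤ h * S.ω₁ * S.ω₂ * (L₃ * ((S.ω₁ + S.ω₂) * h / 2)) := by
            refine mul_le_mul_of_nonneg_left (le_trans hb ?_) (by positivity)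
            exact mul_le_mul_of_nonneg_left hτμsum hL₃0
        _ = (S.ω₁ * S.ω₂ * L₃ * ((S.ω₁ + S.ω₂)/2)) * h^2 := by ring
        _ ≤ CL * h^2 := mul_le_mul_of_nonneg_right hCL₃ (by positivity)
        _ = h^2 * CL := mul_comm _ _
    have hId : (((n : ℝ) - (S.n₀ h : ℝ)) / S.Tscl₁ F h + ((m : ℝ) - (S.m₀ h : ℝ)) / S.Tscl₂ F h
        + ((n : ℝ) - (S.n₀ h : ℝ)) ^ 2 / S.Tsrev₁ F h
        + ((m : ℝ) - (S.m₀ h : ℝ)) ^ 2 / S.Tsrev₂ F h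
        + ((n : ℝ) - (S.n₀ h : ℝ)) * ((m : ℝ) - (S.m₀ h : ℝ)) / S.Tsrev₁₂ F h)
      - (((n : ℝ) - (S.n₀ h : ℝ)) / S.Tscl₁ F h + ((m : ℝ) - (S.m₀ h : ℝ)) / S.Tscl₂ F h
        + ((n : ℝ) - (S.n₀ h : ℝ)) ^ 2 / S.Trev₁ F h
        + ((m : ℝ) - (S.m₀ h : ℝ)) ^ 2 / S.Trev₂ F h
        + ((n : ℝ) - (S.n₀ h : ℝ)) * ((m : ℝ) - (S.m₀ h : ℝ)) / S.Trev₁₂ F h)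
      = (((n : ℝ) - (S.n₀ h : ℝ))^2 * (h * S.ω₁^2 * (pev (pderiv 0 (pderiv 0 F))
            (S.eigτ h ((S.n₀ h : ℕ) : ℤ)) (S.eigμ h ((S.m₀ h : ℕ) : ℤ))
            - pev (pderiv 0 (pderiv 0 F)) S.E₁ S.E₂))
        + ((m : ℝ) - (S.m₀ h : ℝ))^2 * (h * S.ω₂^2 * (pev (pderiv 1 (pderiv 1 F))
            (S.eigτ h ((S.n₀ h : ℕ) : ℤ)) (S.eigμ h ((S.m₀ h : ℕ) : ℤ))
            - pev (pderiv 1 (pderiv 1 F)) S.E₁ S.E₂))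
        + ((n : ℝ) - (S.n₀ h : ℝ)) * ((m : ℝ) - (S.m₀ h : ℝ)) * (h * S.ω₁ * S.ω₂
            * (pev (pderiv 1 (pderiv 0 F))
            (S.eigτ h ((S.n₀ h : ℕ) : ℤ)) (S.eigμ h ((S.m₀ h : ℕ) : ℤ))
            - pev (pderiv 1 (pderiv 0 F)) S.E₁ S.E₂))) / (4*π) := by
      unfold SCSetup.Tsrev₁ SCSetup.Tsrev₂ SCSetup.Tsrev₁₂
        SCSetup.Trev₁ SCSetup.Trev₂ SCSetup.Trev₁₂
      rw [div_div_eq_mul_div, div_div_eq_mul_div, div_div_eq_mul_div,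
        div_div_eq_mul_div, div_div_eq_mul_div, div_div_eq_mul_div]
      ring
    rw [hId, abs_div, abs_of_pos (by positivity : (0:ℝ) < 4*π)]
    have hnum := num_quad_bound (a := ((n:ℝ) - (S.n₀ h : ℝ))) (b := ((m:ℝ) - (S.m₀ h : ℝ)))
      (show (0:ℝ) ≤ h^2 * CL by positivity) hd₁ hd₂ hd₃
    rw [div_le_div_iff₀ (by positivity) (by positivity : (0:ℝ) < 2*π)]
    calc |((n : ℝ) - (S.n₀ h : ℝ))^2 * (h * S.ω₁^2 * (pev (pderiv 0 (pderiv 0 F))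
            (S.eigτ h ((S.n₀ h : ℕ) : ℤ)) (S.eigμ h ((S.m₀ h : ℕ) : ℤ))
            - pev (pderiv 0 (pderiv 0 F)) S.E₁ S.E₂))
        + ((m : ℝ) - (S.m₀ h : ℝ))^2 * (h * S.ω₂^2 * (pev (pderiv 1 (pderiv 1 F))
            (S.eigτ h ((S.n₀ h : ℕ) : ℤ)) (S.eigμ h ((S.m₀ h : ℕ) : ℤ))
            - pev (pderiv 1 (pderiv 1 F)) S.E₁ S.E₂))
        + ((n : ℝ) - (S.n₀ h : ℝ)) * ((m : ℝ) - (S.m₀ h : ℝ)) * (h * S.ω₁ * S.ω₂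
            * (pev (pderiv 1 (pderiv 0 F))
            (S.eigτ h ((S.n₀ h : ℕ) : ℤ)) (S.eigμ h ((S.m₀ h : ℕ) : ℤ))
            - pev (pderiv 1 (pderiv 0 F)) S.E₁ S.E₂))| * (2*π)
        ≤ (h^2 * CL * (2*(((n : ℝ) - (S.n₀ h : ℝ))^2 + ((m : ℝ) - (S.m₀ h : ℝ))^2))) * (2*π) :=
          mul_le_mul_of_nonneg_right hnum (by positivity)
      _ = h^2 * CL * (((n : ℝ) - (S.n₀ h : ℝ))^2 + ((m : ℝ) - (S.m₀ h : ℝ))^2) * (4*π) := by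
          ring
  -- term bounds
  set D₂v : ℝ := t * h^2 * CL * (CA * (c₁⁻¹^2 + c₂⁻¹^2)) with hD₂def
  have hth2CL : 0 ≤ t * h^2 * CL :=
    mul_nonneg (mul_nonneg ht0 (by positivity)) hCLpos.le
  have hD₂0 : 0 ≤ D₂v := mul_nonneg hth2CL (by positivity)
  have hfb : ∀ n m : ℕ,
      ‖((S.a h n m : ℝ) : ℂ)^2 * Complex.exp (-(2 * (π:ℂ) * Complex.I) * (t:ℂ) *
        ((((n : ℝ) - (S.n₀ h : ℝ)) / S.Tscl₁ F h + ((m : ℝ) - (S.m₀ h : ℝ)) / S.Tscl₂ F h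
        + ((n : ℝ) - (S.n₀ h : ℝ)) ^ 2 / S.Tsrev₁ F h
        + ((m : ℝ) - (S.m₀ h : ℝ)) ^ 2 / S.Tsrev₂ F h
        + ((n : ℝ) - (S.n₀ h : ℝ)) * ((m : ℝ) - (S.m₀ h : ℝ)) / S.Tsrev₁₂ F h : ℝ) : ℂ))‖
      ≤ CA * (P₁ n * P₂ m) := by
    intro n m
    rw [hanorm n m]
    exact hAi n m
  have hgb : ∀ n m : ℕ,
      ‖((S.a h n m : ℝ) : ℂ)^2 * Complex.exp (-(2 * (π:ℂ) * Complex.I) * (t:ℂ) *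
        ((((n : ℝ) - (S.n₀ h : ℝ)) / S.Tscl₁ F h + ((m : ℝ) - (S.m₀ h : ℝ)) / S.Tscl₂ F h
        + ((n : ℝ) - (S.n₀ h : ℝ)) ^ 2 / S.Trev₁ F h
        + ((m : ℝ) - (S.m₀ h : ℝ)) ^ 2 / S.Trev₂ F h
        + ((n : ℝ) - (S.n₀ h : ℝ)) * ((m : ℝ) - (S.m₀ h : ℝ)) / S.Trev₁₂ F h : ℝ) : ℂ))‖
      ≤ CA * (P₁ n * P₂ m) := by
    intro n m
    rw [hanorm n m]
    exact hAi n m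
  have h2πt : (0:ℝ) ≤ 2*π*t := mul_nonneg (by positivity) ht0
  have hcanc : ∀ s : ℝ, 2*π*t*(h^2 * CL * s/(2*π)) = t*h^2*CL*s := by
    intro s
    field_simp
  have hfgb : ∀ n m : ℕ,
      ‖((S.a h n m : ℝ) : ℂ)^2 * Complex.exp (-(2 * (π:ℂ) * Complex.I) * (t:ℂ) *
        ((((n : ℝ) - (S.n₀ h : ℝ)) / S.Tscl₁ F h + ((m : ℝ) - (S.m₀ h : ℝ)) / S.Tscl₂ F h
        + ((n : ℝ) - (S.n₀ h : ℝ)) ^ 2 / S.Tsrev₁ F h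
        + ((m : ℝ) - (S.m₀ h : ℝ)) ^ 2 / S.Tsrev₂ F h
        + ((n : ℝ) - (S.n₀ h : ℝ)) * ((m : ℝ) - (S.m₀ h : ℝ)) / S.Tsrev₁₂ F h : ℝ) : ℂ))
      - ((S.a h n m : ℝ) : ℂ)^2 * Complex.exp (-(2 * (π:ℂ) * Complex.I) * (t:ℂ) *
        ((((n : ℝ) - (S.n₀ h : ℝ)) / S.Tscl₁ F h + ((m : ℝ) - (S.m₀ h : ℝ)) / S.Tscl₂ F h
        + ((n : ℝ) - (S.n₀ h : ℝ)) ^ 2 / S.Trev₁ F h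
        + ((m : ℝ) - (S.m₀ h : ℝ)) ^ 2 / S.Trev₂ F h
        + ((n : ℝ) - (S.n₀ h : ℝ)) * ((m : ℝ) - (S.m₀ h : ℝ)) / S.Trev₁₂ F h : ℝ) : ℂ))‖
      ≤ D₂v * (P₁ n * P₂ m) := by
    intro n m
    rw [← mul_sub, norm_mul, norm_pow, Complex.norm_real, Real.norm_eq_abs, sq_abs]
    calc (S.a h n m)^2 * ‖Complex.exp (-(2 * (π:ℂ) * Complex.I) * (t:ℂ) *
        ((((n : ℝ) - (S.n₀ h : ℝ)) / S.Tscl₁ F h + ((m : ℝ) - (S.m₀ h : ℝ)) / S.Tscl₂ F h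
        + ((n : ℝ) - (S.n₀ h : ℝ)) ^ 2 / S.Tsrev₁ F h
        + ((m : ℝ) - (S.m₀ h : ℝ)) ^ 2 / S.Tsrev₂ F h
        + ((n : ℝ) - (S.n₀ h : ℝ)) * ((m : ℝ) - (S.m₀ h : ℝ)) / S.Tsrev₁₂ F h : ℝ) : ℂ))
      - Complex.exp (-(2 * (π:ℂ) * Complex.I) * (t:ℂ) *
        ((((n : ℝ) - (S.n₀ h : ℝ)) / S.Tscl₁ F h + ((m : ℝ) - (S.m₀ h : ℝ)) / S.Tscl₂ F h
        + ((n : ℝ) - (S.n₀ h : ℝ)) ^ 2 / S.Trev₁ F h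
        + ((m : ℝ) - (S.m₀ h : ℝ)) ^ 2 / S.Trev₂ F h
        + ((n : ℝ) - (S.n₀ h : ℝ)) * ((m : ℝ) - (S.m₀ h : ℝ)) / S.Trev₁₂ F h : ℝ) : ℂ))‖
        ≤ (S.a h n m)^2 * (2*π*t*|(((n : ℝ) - (S.n₀ h : ℝ)) / S.Tscl₁ F h
            + ((m : ℝ) - (S.m₀ h : ℝ)) / S.Tscl₂ F h
            + ((n : ℝ) - (S.n₀ h : ℝ)) ^ 2 / S.Tsrev₁ F h
            + ((m : ℝ) - (S.m₀ h : ℝ)) ^ 2 / S.Tsrev₂ F h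
            + ((n : ℝ) - (S.n₀ h : ℝ)) * ((m : ℝ) - (S.m₀ h : ℝ)) / S.Tsrev₁₂ F h)
          - (((n : ℝ) - (S.n₀ h : ℝ)) / S.Tscl₁ F h + ((m : ℝ) - (S.m₀ h : ℝ)) / S.Tscl₂ F h
            + ((n : ℝ) - (S.n₀ h : ℝ)) ^ 2 / S.Trev₁ F h
            + ((m : ℝ) - (S.m₀ h : ℝ)) ^ 2 / S.Trev₂ F h
            + ((n : ℝ) - (S.n₀ h : ℝ)) * ((m : ℝ) - (S.m₀ h : ℝ)) / S.Trev₁₂ F h)|) :=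
          mul_le_mul_of_nonneg_left (hexpdiff _ _) (sq_nonneg _)
      _ ≤ (S.a h n m)^2 * (2*π*t*(h^2 * CL
            * (((n : ℝ) - (S.n₀ h : ℝ))^2 + ((m : ℝ) - (S.m₀ h : ℝ))^2) / (2*π))) := by
          refine mul_le_mul_of_nonneg_left ?_ (sq_nonneg _)
          exact mul_le_mul_of_nonneg_left (hXdiff n m) h2πt
      _ = t*h^2*CL * ((S.a h n m)^2
            * (((n : ℝ) - (S.n₀ h : ℝ))^2 + ((m : ℝ) - (S.m₀ h : ℝ))^2)) := by
          rw [hcanc]; ring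
      _ ≤ t*h^2*CL * (CA * (c₁⁻¹^2 + c₂⁻¹^2) * (P₁ n * P₂ m)) :=
          mul_le_mul_of_nonneg_left (hAii n m) hth2CL
      _ = D₂v * (P₁ n * P₂ m) := by rw [hD₂def]; ring
  -- assemble the double sums
  unfold SCSetup.a2s SCSetup.a2
  refine le_trans (tsum_tsum_sub_bound hP₁sum hP₂sum (fun n => (hP₁pos n).le)
    (fun m => (hP₂pos m).le) hD₂0 hfb hgb hfgb) ?_
  have hT₁0 : 0 ≤ ∑' n, P₁ n := tsum_nonneg (fun n => (hP₁pos n).le)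
  have hT₂0 : 0 ≤ ∑' m, P₂ m := tsum_nonneg (fun m => (hP₂pos m).le)
  have hstep1 : D₂v * ((∑' n, P₁ n) * (∑' m, P₂ m)) ≤ D₂v * ((4/c₁)*(4/c₂)) := by
    refine mul_le_mul_of_nonneg_left ?_ hD₂0
    exact mul_le_mul hP₁tsum hP₂tsum hT₂0 (by positivity)
  refine le_trans hstep1 ?_
  -- powers of h
  have hA₁ne : A₁ ≠ 0 := ne_of_gt hA₁pos
  have hA₂ne : A₂ ≠ 0 := ne_of_gt hA₂pos
  have hω₁ne : S.ω₁ ≠ 0 := ne_of_gt hω₁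
  have hω₂ne : S.ω₂ ≠ 0 := ne_of_gt hω₂
  have hA₁inv : A₁⁻¹ = h ^ (-e₁) := by rw [hA₁def, ← Real.rpow_neg hh0.le]
  have hA₂inv : A₂⁻¹ = h ^ (-e₂) := by rw [hA₂def, ← Real.rpow_neg hh0.le]
  have hh2 : (h:ℝ)^(2:ℕ) = h ^ ((2:ℝ)) := by
    rw [← Real.rpow_natCast h 2]; norm_num
  have hgroup1 : h^(2:ℕ) * A₁ * A₂ * A₁⁻¹ * A₁⁻¹ * A₁⁻¹ * A₂⁻¹ = h ^ (2*S.δ₁') := by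
    rw [hA₁inv, hA₂inv, hA₁def, hA₂def, hh2,
      ← Real.rpow_add hh0, ← Real.rpow_add hh0, ← Real.rpow_add hh0,
      ← Real.rpow_add hh0, ← Real.rpow_add hh0, ← Real.rpow_add hh0]
    congr 1
    rw [he₁def]
    ring
  have hgroup2 : h^(2:ℕ) * A₁ * A₂ * A₂⁻¹ * A₂⁻¹ * A₁⁻¹ * A₂⁻¹ = h ^ (2*S.δ₂') := by
    rw [hA₁inv, hA₂inv, hA₁def, hA₂def, hh2,
      ← Real.rpow_add hh0, ← Real.rpow_add hh0, ← Real.rpow_add hh0,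
      ← Real.rpow_add hh0, ← Real.rpow_add hh0, ← Real.rpow_add hh0]
    congr 1
    rw [he₂def]
    ring
  have hDeq : D₂v * ((4/c₁)*(4/c₂)) = (16*CL*B^2*S.F0⁻¹*S.ω₁⁻¹*S.ω₂⁻¹) * t
      * (S.ω₁⁻¹^2 * (h^(2:ℕ) * A₁ * A₂ * A₁⁻¹ * A₁⁻¹ * A₁⁻¹ * A₂⁻¹)
        + S.ω₂⁻¹^2 * (h^(2:ℕ) * A₁ * A₂ * A₂⁻¹ * A₂⁻¹ * A₁⁻¹ * A₂⁻¹)) := by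
    rw [hD₂def, hCAdef, hc₁def, hc₂def]
    field_simp
    ring
  rw [hDeq, hgroup1, hgroup2]
  -- final comparison
  have hX0 : 0 < h ^ (2*S.δ₁') := Real.rpow_pos_of_pos hh0 _
  have hY0 : 0 < h ^ (2*S.δ₂') := Real.rpow_pos_of_pos hh0 _
  have hbase0 : (0:ℝ) ≤ 16*CL*B^2*S.F0⁻¹*S.ω₁⁻¹*S.ω₂⁻¹ := by positivity
  have hstep2 : (16*CL*B^2*S.F0⁻¹*S.ω₁⁻¹*S.ω₂⁻¹) * t
      * (S.ω₁⁻¹^2 * h ^ (2*S.δ₁') + S.ω₂⁻¹^2 * h ^ (2*S.δ₂'))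
      ≤ C₀ * t * (h ^ (2*S.δ₁') + h ^ (2*S.δ₂')) := by
    have he : C₀ * t * (h ^ (2*S.δ₁') + h ^ (2*S.δ₂'))
        - (16*CL*B^2*S.F0⁻¹*S.ω₁⁻¹*S.ω₂⁻¹) * t
          * (S.ω₁⁻¹^2 * h ^ (2*S.δ₁') + S.ω₂⁻¹^2 * h ^ (2*S.δ₂'))
        = (16*CL*B^2*S.F0⁻¹*S.ω₁⁻¹*S.ω₂⁻¹) * t
          * (S.ω₂⁻¹^2 * h ^ (2*S.δ₁') + S.ω₁⁻¹^2 * h ^ (2*S.δ₂')) := by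
      rw [hC₀def]; ring
    have hpos : 0 ≤ (16*CL*B^2*S.F0⁻¹*S.ω₁⁻¹*S.ω₂⁻¹) * t
        * (S.ω₂⁻¹^2 * h ^ (2*S.δ₁') + S.ω₁⁻¹^2 * h ^ (2*S.δ₂')) := by
      refine mul_nonneg (mul_nonneg hbase0 ht0) ?_
      positivity
    linarith only [he, hpos]
  refine le_trans hstep2 ?_
  -- exponent comparison
  have hmono1 : h ^ (2*S.δ₁') ≤ h ^ (min δ₁ δ₂) := by
    refine Real.rpow_le_rpow_of_exponent_ge hh0 hh1 ?_
    have : min δ₁ δ₂ ≤ δ₁ := min_le_left _ _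
    linarith only [this, hδ₁'δ₁, hδ₁'pos]
  have hmono2 : h ^ (2*S.δ₂') ≤ h ^ (min δ₁ δ₂) := by
    refine Real.rpow_le_rpow_of_exponent_ge hh0 hh1 ?_
    have : min δ₁ δ₂ ≤ δ₂ := min_le_right _ _
    linarith only [this, hδ₂'δ₂, hδ₂'pos]
  have hδm0 : 0 < h ^ (min δ₁ δ₂) := Real.rpow_pos_of_pos hh0 _
  have hυ0 : 0 < h ^ υ := Real.rpow_pos_of_pos hh0 _
  calc C₀ * t * (h ^ (2*S.δ₁') + h ^ (2*S.δ₂'))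
      ≤ C₀ * (h ^ υ) * (h ^ (2*S.δ₁') + h ^ (2*S.δ₂')) := by
        refine mul_le_mul_of_nonneg_right ?_ (by positivity)
        exact mul_le_mul_of_nonneg_left htle hC₀0
    _ ≤ C₀ * (h ^ υ) * (h ^ (min δ₁ δ₂) + h ^ (min δ₁ δ₂)) := by
        refine mul_le_mul_of_nonneg_left (add_le_add hmono1 hmono2) ?_
        positivity
    _ = 2 * C₀ * (h ^ υ * h ^ (min δ₁ δ₂)) := by ring
    _ = 2 * C₀ * h ^ (υ + min δ₁ δ₂) := by rw [← Real.rpow_add hh0]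
    _ ≤ C * h ^ (υ + min δ₁ δ₂) := by
        refine mul_le_mul_of_nonneg_right ?_ (Real.rpow_pos_of_pos hh0 _).le
        rw [hCdef]; linarith only [hC₀0]
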